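/- Assume P(lim_{|k|→∞} ‖Y_k‖ = 0) = 1. Then for every shift invariant nonnegative measurable functional K on E (i.e., K(Bx) = K(x) for all x), E[K(Y) · 1{sup_{j≤−1} ‖Y_j‖ ≤ 1}] = E[K(Y) · 1{I(Y) = 0}]. -/

import Mathlib

open MeasureTheory ProbabilityTheory Set Filter
open scoped ENNReal NNReal Topology

noncomputable section

/-- The iterated backshift operator: `(B^k x) j = x (j - k)`. -/
def backshift {V : Type*} (k : ℤ) (x : ℤ → V) : ℤ → V := fun j => x (j - k)

/-- `InfargmaxAt x j` is the event `I(x) = j` for the infargmax functional `I`: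
the first time the supremum of the norms is achieved is `j`, i.e.
`sup_{i<j} ‖x_i‖ < ‖x_j‖` and `sup_{i>j} ‖x_i‖ ≤ ‖x_j‖`.  (`I(x) ∈ ℤ` is then
expressed as `∃ j, InfargmaxAt x j`.) -/
def InfargmaxAt {V : Type*} [NormedAddCommGroup V] (x : ℤ → V) (j : ℤ) : Prop :=
  (⨆ i : {i : ℤ // i < j}, (‖x i.1‖₊ : ℝ≥0∞)) < (‖x j‖₊ : ℝ≥0∞) ∧
    (⨆ i : {i : ℤ // j < i}, (‖x i.1‖₊ : ℝ≥0∞)) ≤ (‖x j‖₊ : ℝ≥0∞)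

/-! Both sides are integrals against the tail measure over events inside `{‖y₀‖ > 1}`, and the
hypothesis on `Y` lets us replace `ν` by its restriction to sequences vanishing at infinity, which is
still shift invariant. Such a sequence with `‖y₀‖ > 1` has a first exceedance time `m` of level `1`
and an infargmax `j`. Splitting `{m = 0}` according to `j = k` and `{j = 0, ‖y₀‖ > 1}` according to
`m = -k`, the shift `B^k` carries the `k`-th piece of the first event onto the `k`-th piece of the
second, so shift invariance of `ν` and of `K` matches the two sums term by term. -/

def VanishesAtInfinity {V : Type*} [Norm V] (x : ℤ → V) : Prop :=
  Tendsto (fun k => ‖x k‖) cofinite (𝓝 0)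

def FirstExceedanceAt {V : Type*} [Norm V] (x : ℤ → V) (m : ℤ) : Prop :=
  1 < ‖x m‖ ∧ ∀ j < m, ‖x j‖ ≤ 1

section Backshift

variable {V : Type*}

lemma backshift_add (a b : ℤ) (x : ℤ → V) :
    backshift (a + b) x = backshift a (backshift b x) := by
  funext j
  simp only [backshift, sub_sub, add_comm a b]

lemma backshift_zero (x : ℤ → V) : backshift 0 x = x := by
  funext j
  simp [backshift]

lemma backshift_invariant {β : Type*} {f : (ℤ → V) → β}
    (hf : ∀ x, f (backshift 1 x) = f x) (k : ℤ) (x : ℤ → V) : f (backshift k x) = f x := by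
  induction k using Int.induction_on generalizing x with
  | zero => rw [backshift_zero]
  | succ k ih => rw [backshift_add, ih, hf]
  | pred k ih => rw [← hf, ← backshift_add, add_sub_cancel, ih]

variable [MeasurableSpace V]

lemma measurable_backshift (k : ℤ) : Measurable (backshift k : (ℤ → V) → ℤ → V) :=
  measurable_pi_lambda _ fun _ => measurable_pi_apply _

lemma measurePreserving_backshift {μ : Measure (ℤ → V)}
    (hμ : MeasurePreserving (backshift 1) μ μ) (k : ℤ) :
    MeasurePreserving (backshift k) μ μ := by
  induction k using Int.induction_on with
  | zero => simpa only [show backshift 0 = id from funext backshift_zero] using .id μ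
  | succ k ih => simpa only [Function.comp_def, ← backshift_add] using ih.comp hμ
  | pred k ih =>
    refine ⟨measurable_backshift _, ?_⟩
    calc μ.map (backshift (-k - 1)) = (μ.map (backshift 1)).map (backshift (-k - 1)) := by
          rw [hμ.map_eq]
      _ = μ.map (backshift (-k)) := by
          rw [Measure.map_map (measurable_backshift _) (measurable_backshift _)]
          congr 1
          funext x
          rw [Function.comp_apply, ← backshift_add, sub_add_cancel]
      _ = μ := ih.map_eq

end Backshift

section Sequences

variable {V : Type*} [NormedAddCommGroup V] {x : ℤ → V}

lemma VanishesAtInfinity.finite_setOf_le_norm (hx : VanishesAtInfinity x) {c : ℝ} (hc : 0 < c) :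
    {i | c ≤ ‖x i‖}.Finite := by
  simpa only [mem_Iio, not_lt] using eventually_cofinite.mp (hx (Iio_mem_nhds hc))

lemma VanishesAtInfinity.backshift (hx : VanishesAtInfinity x) (k : ℤ) :
    VanishesAtInfinity (backshift k x) :=
  hx.comp (sub_left_injective (b := k)).tendsto_cofinite

lemma vanishesAtInfinity_backshift_iff {k : ℤ} :
    VanishesAtInfinity (backshift k x) ↔ VanishesAtInfinity x := by
  refine ⟨fun h => ?_, fun h => h.backshift k⟩
  simpa only [← backshift_add, neg_add_cancel, backshift_zero] using h.backshift (-k)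

lemma VanishesAtInfinity.exists_max_norm (hx : VanishesAtInfinity x) {s : Set ℤ} {i₀ : ℤ}
    (hi₀ : i₀ ∈ s) (h : x i₀ ≠ 0) : ∃ j ∈ s, ∀ i ∈ s, ‖x i‖ ≤ ‖x j‖ := by
  obtain ⟨j, ⟨hjs, hj⟩, hmax⟩ := exists_max_image _ (fun i => ‖x i‖)
    ((hx.finite_setOf_le_norm (norm_pos_iff.2 h)).inter_of_right s) ⟨i₀, hi₀, le_refl ‖x i₀‖⟩
  exact ⟨j, hjs, fun i hi => (le_total ‖x i₀‖ ‖x i‖).elim (fun h => hmax i ⟨hi, h⟩)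
    fun h => h.trans hj⟩

lemma VanishesAtInfinity.iSup_nnnorm_lt (hx : VanishesAtInfinity x) {p : ℤ → Prop} {j : ℤ}
    (hj : x j ≠ 0) (h : ∀ i, p i → ‖x i‖ < ‖x j‖) :
    ⨆ i : {i // p i}, (‖x i.1‖₊ : ℝ≥0∞) < ‖x j‖₊ := by
  by_cases hp : ∃ i, p i ∧ x i ≠ 0
  · obtain ⟨i₀, hi₀, hxi₀⟩ := hp
    obtain ⟨i₁, hi₁, hmax⟩ := hx.exists_max_norm (s := {i | p i}) hi₀ hxi₀
    calc ⨆ i : {i // p i}, (‖x i.1‖₊ : ℝ≥0∞) ≤ ‖x i₁‖₊ :=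
          iSup_le fun i => by exact_mod_cast hmax i.1 i.2
      _ < ‖x j‖₊ := by exact_mod_cast h i₁ hi₁
  · push Not at hp
    calc ⨆ i : {i // p i}, (‖x i.1‖₊ : ℝ≥0∞) ≤ 0 :=
          iSup_le fun i => by simp [hp i.1 i.2]
      _ < ‖x j‖₊ := by simpa using hj

lemma InfargmaxAt.norm_lt {j i : ℤ} (h : InfargmaxAt x j) (hi : i < j) : ‖x i‖ < ‖x j‖ := by
  have : (‖x i‖₊ : ℝ≥0∞) < ‖x j‖₊ :=
    (le_iSup (fun i : {i // i < j} => (‖x i.1‖₊ : ℝ≥0∞)) ⟨i, hi⟩).trans_lt h.1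
  exact_mod_cast this

lemma InfargmaxAt.norm_le {j : ℤ} (h : InfargmaxAt x j) (i : ℤ) : ‖x i‖ ≤ ‖x j‖ := by
  rcases lt_trichotomy i j with hi | rfl | hi
  · exact (h.norm_lt hi).le
  · exact le_rfl
  · have : (‖x i‖₊ : ℝ≥0∞) ≤ ‖x j‖₊ :=
      (le_iSup (fun i : {i // j < i} => (‖x i.1‖₊ : ℝ≥0∞)) ⟨i, hi⟩).trans h.2
    exact_mod_cast this

lemma InfargmaxAt.unique {j l : ℤ} (hj : InfargmaxAt x j) (hl : InfargmaxAt x l) : j = l := by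
  by_contra hne
  rcases lt_or_gt_of_ne hne with h | h
  · exact (hj.norm_le l).not_gt (hl.norm_lt h)
  · exact (hl.norm_le j).not_gt (hj.norm_lt h)

lemma infargmaxAt_backshift (k j : ℤ) :
    InfargmaxAt (backshift k x) j ↔ InfargmaxAt x (j - k) := by
  have hsup : ∀ p q : ℤ → Prop, (∀ i, p i ↔ q (i - k)) →
      ⨆ i : {i // p i}, (‖backshift k x i.1‖₊ : ℝ≥0∞) = ⨆ i : {i // q i}, (‖x i.1‖₊ : ℝ≥0∞) :=
    fun p q hpq => ((Equiv.subRight k).subtypeEquiv hpq).iSup_comp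
      (g := fun i : {i // q i} => (‖x i.1‖₊ : ℝ≥0∞))
  unfold InfargmaxAt
  rw [hsup (· < j) (· < j - k) fun i => (sub_lt_sub_iff_right k).symm,
    hsup (j < ·) (j - k < ·) fun i => (sub_lt_sub_iff_right k).symm]
  rfl

lemma VanishesAtInfinity.exists_infargmaxAt (hx : VanishesAtInfinity x) {i₀ : ℤ} (h : x i₀ ≠ 0) :
    ∃ j, InfargmaxAt x j := by
  obtain ⟨j₁, -, hmax⟩ := hx.exists_max_norm (mem_univ i₀) h
  have hj₁ : 0 < ‖x j₁‖ := (norm_pos_iff.2 h).trans_le (hmax i₀ trivial)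
  obtain ⟨j, hj, hfirst⟩ :=
    exists_min_image _ id (hx.finite_setOf_le_norm hj₁) ⟨j₁, le_refl ‖x j₁‖⟩
  have hjmax : ∀ i, ‖x i‖ ≤ ‖x j‖ := fun i => (hmax i trivial).trans hj
  refine ⟨j, hx.iSup_nnnorm_lt (norm_pos_iff.1 (hj₁.trans_le hj)) fun i hi => ?_,
    iSup_le fun i => by exact_mod_cast hjmax i.1⟩
  exact lt_of_not_ge fun hji => hi.not_ge (hfirst i (hj.trans hji))

lemma firstExceedanceAt_backshift (k m : ℤ) :
    FirstExceedanceAt (backshift k x) m ↔ FirstExceedanceAt x (m - k) :=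
  and_congr Iff.rfl ⟨fun h j hj => by simpa [backshift] using h (j + k) (by omega),
    fun h j hj => h (j - k) (by omega)⟩

lemma VanishesAtInfinity.exists_firstExceedanceAt (hx : VanishesAtInfinity x) {i₀ : ℤ}
    (h : 1 < ‖x i₀‖) : ∃ m, FirstExceedanceAt x m := by
  obtain ⟨m, hm, hfirst⟩ := exists_min_image _ id
    ((hx.finite_setOf_le_norm one_pos).subset fun i (hi : 1 < ‖x i‖) => hi.le) ⟨i₀, h⟩
  exact ⟨m, hm, fun j hj => not_lt.1 fun hxj => hj.not_ge (hfirst j hxj)⟩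

lemma FirstExceedanceAt.unique {m m' : ℤ} (hm : FirstExceedanceAt x m)
    (hm' : FirstExceedanceAt x m') : m = m' := by
  by_contra hne
  rcases lt_or_gt_of_ne hne with h | h
  · exact (hm'.2 m h).not_gt hm.1
  · exact (hm.2 m' h).not_gt hm'.1

variable [MeasurableSpace V] [OpensMeasurableSpace V]

lemma measurableSet_vanishesAtInfinity : MeasurableSet {x : ℤ → V | VanishesAtInfinity x} := by
  unfold VanishesAtInfinity
  rw [Int.cofinite_eq]
  exact measurableSet_tendsto _ fun k => (measurable_pi_apply k).norm

lemma measurableSet_infargmaxAt (j : ℤ) : MeasurableSet {x : ℤ → V | InfargmaxAt x j} := by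
  have hnorm : ∀ i, Measurable fun x : ℤ → V => (‖x i‖₊ : ℝ≥0∞) :=
    fun i => (measurable_pi_apply i).nnnorm.coe_nnreal_ennreal
  exact (measurableSet_lt (.iSup fun i : {i // i < j} => hnorm i.1) (hnorm j)).inter
    (measurableSet_le (.iSup fun i : {i // j < i} => hnorm i.1) (hnorm j))

lemma measurableSet_firstExceedanceAt (m : ℤ) :
    MeasurableSet {x : ℤ → V | FirstExceedanceAt x m} := by
  unfold FirstExceedanceAt
  measurability

end Sequences

lemma MeasureTheory.setLIntegral_eq_tsum_of_ae_iff_exists {α ι : Type*} [MeasurableSpace α]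
    [Countable ι] {μ : Measure α} {s : Set α} {t : ι → Set α} (ht : ∀ i, MeasurableSet (t i))
    (hd : Pairwise (Function.onFun Disjoint t)) (hst : ∀ᵐ x ∂μ, x ∈ s ↔ ∃ i, x ∈ t i) (f : α → ℝ≥0∞) :
    ∫⁻ x in s, f x ∂μ = ∑' i, ∫⁻ x in t i, f x ∂μ := by
  rw [← lintegral_iUnion ht hd]
  exact setLIntegral_congr (eventuallyEq_set.2 (by simpa only [mem_iUnion] using hst))

section TailMeasure

variable {V : Type*} [NormedAddCommGroup V] [MeasurableSpace V] [OpensMeasurableSpace V]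
  {μ : Measure (ℤ → V)} {K : (ℤ → V) → ℝ≥0∞}

lemma MeasureTheory.MeasurePreserving.restrict_vanishesAtInfinity
    (hμ : MeasurePreserving (backshift 1) μ μ) :
    MeasurePreserving (backshift 1) (μ.restrict {y | VanishesAtInfinity y})
      (μ.restrict {y | VanishesAtInfinity y}) := by
  have hpre : backshift 1 ⁻¹' {y : ℤ → V | VanishesAtInfinity y} = {y | VanishesAtInfinity y} :=
    ext fun y => vanishesAtInfinity_backshift_iff
  simpa only [hpre] using hμ.restrict_preimage measurableSet_vanishesAtInfinity

lemma setLIntegral_firstExceedanceAt_zero_infargmaxAt_eq (hμ : MeasurePreserving (backshift 1) μ μ)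
    (hK : Measurable K) (hKshift : ∀ x, K (backshift 1 x) = K x) (k : ℤ) :
    ∫⁻ y in {y | FirstExceedanceAt y 0 ∧ InfargmaxAt y k}, K y ∂μ
      = ∫⁻ y in {y | FirstExceedanceAt y (-k) ∧ InfargmaxAt y 0}, K y ∂μ := by
  have hpre : backshift k ⁻¹' {y : ℤ → V | FirstExceedanceAt y 0 ∧ InfargmaxAt y k}
      = {y | FirstExceedanceAt y (-k) ∧ InfargmaxAt y 0} := by
    ext y
    simp only [mem_preimage, mem_ofPred_eq, firstExceedanceAt_backshift, infargmaxAt_backshift,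
      zero_sub, sub_self]
  calc ∫⁻ y in {y | FirstExceedanceAt y 0 ∧ InfargmaxAt y k}, K y ∂μ
      = ∫⁻ y in backshift k ⁻¹' {y | FirstExceedanceAt y 0 ∧ InfargmaxAt y k},
          K (backshift k y) ∂μ :=
        ((measurePreserving_backshift hμ k).setLIntegral_comp_preimage
          ((measurableSet_firstExceedanceAt 0).inter (measurableSet_infargmaxAt k)) hK).symm
    _ = _ := by simp only [backshift_invariant hKshift, hpre]

theorem setLIntegral_firstExceedanceAt_zero_eq_infargmaxAt_zero
    (hμ : MeasurePreserving (backshift 1) μ μ) (hvan : ∀ᵐ y ∂μ, VanishesAtInfinity y)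
    (hK : Measurable K) (hKshift : ∀ x, K (backshift 1 x) = K x) :
    ∫⁻ y in {y | FirstExceedanceAt y 0}, K y ∂μ
      = ∫⁻ y in {y | InfargmaxAt y 0 ∧ 1 < ‖y 0‖}, K y ∂μ := by
  have hsplit_fe : ∫⁻ y in {y | FirstExceedanceAt y 0}, K y ∂μ
      = ∑' k : ℤ, ∫⁻ y in {y | FirstExceedanceAt y 0 ∧ InfargmaxAt y k}, K y ∂μ := by
    refine setLIntegral_eq_tsum_of_ae_iff_exists
      (fun k => (measurableSet_firstExceedanceAt 0).inter (measurableSet_infargmaxAt k))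
      (fun k l hkl => disjoint_left.2 fun y hk hl => hkl (hk.2.unique hl.2)) ?_ K
    filter_upwards [hvan] with y hy
    refine ⟨fun h => ?_, fun ⟨_, h⟩ => h.1⟩
    obtain ⟨k, hk⟩ := hy.exists_infargmaxAt (norm_pos_iff.1 (one_pos.trans h.1))
    exact ⟨k, h, hk⟩
  have hsplit_ia : ∫⁻ y in {y | InfargmaxAt y 0 ∧ 1 < ‖y 0‖}, K y ∂μ
      = ∑' k : ℤ, ∫⁻ y in {y | FirstExceedanceAt y (-k) ∧ InfargmaxAt y 0}, K y ∂μ := by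
    refine setLIntegral_eq_tsum_of_ae_iff_exists
      (fun k => (measurableSet_firstExceedanceAt (-k)).inter (measurableSet_infargmaxAt 0))
      (fun k l hkl => disjoint_left.2 fun y hk hl => hkl (neg_injective (hk.1.unique hl.1))) ?_ K
    filter_upwards [hvan] with y hy
    refine ⟨fun ⟨hia, h⟩ => ?_, fun ⟨k, hfe, hia⟩ => ⟨hia, hfe.1.trans_le (hia.norm_le _)⟩⟩
    obtain ⟨m, hm⟩ := hy.exists_firstExceedanceAt h
    exact ⟨-m, by rwa [neg_neg], hia⟩
  rw [hsplit_fe, hsplit_ia]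
  exact tsum_congr (setLIntegral_firstExceedanceAt_zero_infargmaxAt_eq hμ hK hKshift)

end TailMeasure

theorem statement10_general
    -- `V` plays the role of `ℝ^d` (`d ≥ 1`) equipped with an arbitrary norm
    {V : Type*} [NormedAddCommGroup V] [MeasurableSpace V] [BorelSpace V]
    -- the tail measure and its properties
    (ν : Measure (ℤ → V))
    (hνshift : ν.map (backshift 1) = ν)
    -- the tail process `Y` and the spectral tail process `Θ`
    {Ω : Type*} [MeasurableSpace Ω] (P : Measure Ω) [IsProbabilityMeasure P]
    (Y : Ω → ℤ → V) (hYmeas : Measurable Y)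
    (hYlaw : P.map Y = ν.restrict {y : ℤ → V | 1 < ‖y 0‖})
    -- the statement
    (hY0 : P {ω | Tendsto (fun k : ℤ => ‖Y ω k‖) cofinite (𝓝 0)} = 1)
    (K : (ℤ → V) → ℝ≥0∞) (hK : Measurable K)
    (hKshift : ∀ x, K (backshift 1 x) = K x) :
    ∫⁻ ω in {ω | ∀ j : ℤ, j ≤ -1 → ‖Y ω j‖ ≤ 1}, K (Y ω) ∂P
      = ∫⁻ ω in {ω | InfargmaxAt (Y ω) 0}, K (Y ω) ∂P := by
  set T := {y : ℤ → V | VanishesAtInfinity y}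
  have hT : MeasurableSet T := measurableSet_vanishesAtInfinity
  have hlaw : P.map Y = (ν.restrict T).restrict {y | 1 < ‖y 0‖} := by
    have hae : ∀ᵐ y ∂(P.map Y), y ∈ T := (ae_map_iff hYmeas.aemeasurable hT).2
      ((ae_mem_iff_measure_eq (hYmeas hT).nullMeasurableSet).2 (by rw [measure_univ]; exact hY0))
    rw [← Measure.restrict_eq_self_of_ae_mem hae, hYlaw, Measure.restrict_restrict hT,
      Measure.restrict_restrict (measurableSet_lt measurable_const (measurable_pi_apply 0).norm),
      inter_comm]
  have htransfer : ∀ s, MeasurableSet s → ∫⁻ ω in Y ⁻¹' s, K (Y ω) ∂P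
      = ∫⁻ y in s ∩ {y | 1 < ‖y 0‖}, K y ∂(ν.restrict T) := fun s hs => by
    rw [← setLIntegral_map hs hK hYmeas, hlaw, Measure.restrict_restrict hs]
  have hfe : {y : ℤ → V | ∀ j : ℤ, j ≤ -1 → ‖y j‖ ≤ 1} ∩ {y | 1 < ‖y 0‖}
      = {y | FirstExceedanceAt y 0} :=
    ext fun y => ⟨fun ⟨hle, hlt⟩ => ⟨hlt, fun j hj => hle j (by omega)⟩,
      fun ⟨hlt, hle⟩ => ⟨fun j hj => hle j (by omega), hlt⟩⟩
  calc ∫⁻ ω in {ω | ∀ j : ℤ, j ≤ -1 → ‖Y ω j‖ ≤ 1}, K (Y ω) ∂P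
      = ∫⁻ y in {y | FirstExceedanceAt y 0}, K y ∂(ν.restrict T) := by
        rw [← hfe, ← htransfer _ (by measurability)]
        rfl
    _ = ∫⁻ y in {y | InfargmaxAt y 0 ∧ 1 < ‖y 0‖}, K y ∂(ν.restrict T) :=
        setLIntegral_firstExceedanceAt_zero_eq_infargmaxAt_zero
          (MeasurePreserving.restrict_vanishesAtInfinity ⟨measurable_backshift 1, hνshift⟩)
          (ae_restrict_mem hT) hK hKshift
    _ = ∫⁻ ω in {ω | InfargmaxAt (Y ω) 0}, K (Y ω) ∂P :=
        (htransfer _ (measurableSet_infargmaxAt 0)).symm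

/-- **First-exceedance / infargmax identity.**  If `P(lim_{|k|→∞} ‖Y_k‖ = 0) = 1`, then
for every shift invariant nonnegative measurable `K` on `E`,
`E[K(Y) 1{sup_{j≤−1} ‖Y_j‖ ≤ 1}] = E[K(Y) 1{I(Y) = 0}]`. -/
theorem statement10
    -- `V` plays the role of `ℝ^d` (`d ≥ 1`) equipped with an arbitrary norm
    {V : Type*} [NormedAddCommGroup V] [NormedSpace ℝ V] [FiniteDimensional ℝ V]
    [Nontrivial V] [MeasurableSpace V] [BorelSpace V]
    (α : ℝ) (hα : 0 < α)
    -- the tail measure and its properties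
    (ν : Measure (ℤ → V))
    (hν0 : ν {0} = 0)
    (hν1 : ν {y : ℤ → V | 1 < ‖y 0‖} = 1)
    (hνshift : ν.map (backshift 1) = ν)
    (hνhom : ∀ A : Set (ℤ → V), MeasurableSet A → ∀ c : ℝ, 0 < c →
      ν ((fun x => c • x) '' A) = ENNReal.ofReal (c ^ (-α)) * ν A)
    -- the tail process `Y` and the spectral tail process `Θ`
    {Ω : Type*} [MeasurableSpace Ω] (P : Measure Ω) [IsProbabilityMeasure P]
    (Y : Ω → ℤ → V) (hYmeas : Measurable Y)
    (hYlaw : P.map Y = ν.restrict {y : ℤ → V | 1 < ‖y 0‖})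
    (Θ : Ω → ℤ → V) (hΘdef : ∀ ω, Θ ω = ‖Y ω 0‖⁻¹ • Y ω)
    (hPareto : ∀ u : ℝ, 1 ≤ u → P {ω | u < ‖Y ω 0‖} = ENNReal.ofReal (u ^ (-α)))
    (hindep : IndepFun (fun ω => ‖Y ω 0‖) Θ P)
    (hpolar : ∀ H : (ℤ → V) → ℝ≥0∞, Measurable H →
      ∫⁻ y in {y : ℤ → V | y 0 ≠ 0}, H y ∂ν
        = ∫⁻ r in Ioi (0 : ℝ),
            (∫⁻ ω, H (r • Θ ω) ∂P) * ENNReal.ofReal (α * r ^ (-α - 1)))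
    -- the statement
    (hY0 : P {ω | Tendsto (fun k : ℤ => ‖Y ω k‖) cofinite (𝓝 0)} = 1)
    (K : (ℤ → V) → ℝ≥0∞) (hK : Measurable K)
    (hKshift : ∀ x, K (backshift 1 x) = K x) :
    ∫⁻ ω in {ω | ∀ j : ℤ, j ≤ -1 → ‖Y ω j‖ ≤ 1}, K (Y ω) ∂P
      = ∫⁻ ω in {ω | InfargmaxAt (Y ω) 0}, K (Y ω) ∂P :=
  statement10_general ν hνshift P Y hYmeas hYlaw hY0 K hK hKshift
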